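/- Let c > 0 be a real number and define q : ℝ × ℂ × ℂ × ℂ → ℝ by q(f, z, w, λ) := f · Im(z + w) − c · Re((conj(w) + z) · conj(λ)). Then: (i) q is a quadratic form on the 7-dimensional real vector space ℝ × ℂ × ℂ × ℂ whose radical (the set of vectors at which the associated polar form vanishes identically) is exactly the 1-dimensional real span of e₀ := (0, 1, −1, 0); (ii) there is a real linear isomorphism T : ℝ⁷ → ℝ × ℂ × ℂ × ℂ such that q(T(x₁,…,x₇)) = x₁² + x₂² + x₃² − x₄² − x₅² − x₆²; in particular q has rank 6 and signature (3, 3), so the maximal dimension of a subspace on which q is negative definite is 3. -/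

import Mathlib

/-!
With `u = Im(z + w)`, `p = Re(z + w)` and `m = Im(z - w)` one has
`q = f u - c (p Re λ + m Im λ)`, and each of the three products is a difference of two squares,
e.g. `f u = ((f + u)/2)² - ((f - u)/2)²`. This gives a linear equivalence carrying the
diagonal form `diag(1, 1, 1, -1, -1, -1, 0)` to `q`; the remaining coordinate `Re(z - w)/2`
spans the direction `e₀`. Hence `q` is a quadratic form, its radical is the image of the
zero-weight axis, and by Sylvester's law of inertia its negative index is the number of
negative weights.
-/

open QuadraticMap QuadraticForm

namespace QuadraticMap

variable {R M P : Type*} [CommRing R] [Invertible (2 : R)] [AddCommGroup M] [Module R M]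
  [AddCommGroup P] [Module R P]

lemma coe_radical_eq_setOf_polar (Q : QuadraticMap R M P) :
    (Q.radical : Set M) = {x | ∀ y, polar Q x y = 0} := by
  ext x
  simp [radical_eq_ker_polarBilin, LinearMap.ext_iff]

end QuadraticMap

namespace QuadraticForm

variable {𝕜 M : Type*} [Field 𝕜] [LinearOrder 𝕜] [IsStrictOrderedRing 𝕜] [AddCommGroup M]
  [Module 𝕜 M] [FiniteDimensional 𝕜 M]

lemma iSup_finrank_negDef_eq_sigNeg (Q : QuadraticForm 𝕜 M) :
    (⨆ W : {W : Submodule 𝕜 M // ∀ v ∈ W, v ≠ 0 → Q v < 0}, Module.finrank 𝕜 W.1) =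
      sigNeg Q := by
  rw [← sSup_range, ← (sigNeg_isGreatest Q).csSup_eq]
  congr 1
  ext r
  simp only [Set.mem_range, Subtype.exists, Set.mem_ofPred_eq, PosDef, Subtype.forall,
    restrict_apply, neg_apply, neg_pos, ne_eq, Submodule.mk_eq_zero]
  exact ⟨fun ⟨V, hV, hr⟩ => ⟨V, hr, hV⟩, fun ⟨V, hr, hV⟩ => ⟨V, hV, hr⟩⟩

end QuadraticForm

def modelForm (c : ℝ) (v : ℝ × ℂ × ℂ × ℂ) : ℝ :=
  v.1 * (v.2.1 + v.2.2.1).im - c * ((star v.2.2.1 + v.2.1) * star v.2.2.2).re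

def signatureWeights : Fin 7 → ℝ := ![1, 1, 1, -1, -1, -1, 0]

noncomputable def diagonalizingEquiv (c : ℝ) (hc : c ≠ 0) : (Fin 7 → ℝ) ≃ₗ[ℝ] ℝ × ℂ × ℂ × ℂ where
  toFun x := (x 0 + x 3, ⟨(x 1 + x 4) / 2 + x 6, (x 0 - x 3 + x 2 + x 5) / 2⟩,
    ⟨(x 1 + x 4) / 2 - x 6, (x 0 - x 3 - x 2 - x 5) / 2⟩, ⟨(x 4 - x 1) / c, (x 5 - x 2) / c⟩)
  invFun v := ![(v.1 + v.2.1.im + v.2.2.1.im) / 2, (v.2.1.re + v.2.2.1.re - c * v.2.2.2.re) / 2,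
    (v.2.1.im - v.2.2.1.im - c * v.2.2.2.im) / 2, (v.1 - v.2.1.im - v.2.2.1.im) / 2,
    (v.2.1.re + v.2.2.1.re + c * v.2.2.2.re) / 2, (v.2.1.im - v.2.2.1.im + c * v.2.2.2.im) / 2,
    (v.2.1.re - v.2.2.1.re) / 2]
  map_add' x y := by
    simp only [Pi.add_apply, Prod.mk_add_mk, Prod.mk.injEq, Complex.ext_iff, Complex.add_re,
      Complex.add_im]
    refine ⟨by ring, ⟨by ring, by ring⟩, ⟨by ring, by ring⟩, by ring, by ring⟩
  map_smul' a x := by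
    simp only [Pi.smul_apply, smul_eq_mul, RingHom.id_apply, Prod.smul_mk, Prod.mk.injEq,
      Complex.ext_iff, Complex.real_smul, Complex.mul_re, Complex.mul_im, Complex.ofReal_re,
      Complex.ofReal_im]
    refine ⟨by ring, ⟨by ring, by ring⟩, ⟨by ring, by ring⟩, by ring, by ring⟩
  left_inv x := by
    funext i
    fin_cases i <;> simp only [Fin.zero_eta, Fin.mk_one, Fin.reduceFinMk, Fin.isValue,
      Matrix.cons_val, Matrix.cons_val_zero, Matrix.cons_val_one] <;> field_simp <;> ring
  right_inv v := by
    simp only [Prod.ext_iff, Complex.ext_iff, Fin.isValue, Matrix.cons_val]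
    refine ⟨by ring, ⟨by ring, by ring⟩, ⟨by ring, by ring⟩, ?_, ?_⟩ <;> field_simp <;> ring

lemma modelForm_diagonalizingEquiv (c : ℝ) (hc : c ≠ 0) (x : Fin 7 → ℝ) :
    modelForm c (diagonalizingEquiv c hc x) =
      x 0 ^ 2 + x 1 ^ 2 + x 2 ^ 2 - x 3 ^ 2 - x 4 ^ 2 - x 5 ^ 2 := by
  simp only [modelForm, diagonalizingEquiv, LinearEquiv.coe_mk, LinearMap.coe_mk, AddHom.coe_mk,
    Complex.add_im, Complex.add_re, Complex.mul_re, Complex.star_def, Complex.conj_re,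
    Complex.conj_im]
  field_simp
  ring

lemma weightedSumSquares_signatureWeights (x : Fin 7 → ℝ) :
    weightedSumSquares ℝ signatureWeights x =
      x 0 ^ 2 + x 1 ^ 2 + x 2 ^ 2 - x 3 ^ 2 - x 4 ^ 2 - x 5 ^ 2 := by
  simp only [weightedSumSquares_apply, Fin.sum_univ_seven, signatureWeights, smul_eq_mul,
    Fin.isValue, Matrix.cons_val]
  ring

noncomputable def modelQuadraticForm (c : ℝ) (hc : c ≠ 0) : QuadraticForm ℝ (ℝ × ℂ × ℂ × ℂ) :=
  (weightedSumSquares ℝ signatureWeights).comp (diagonalizingEquiv c hc).symm.toLinearMap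

lemma coe_modelQuadraticForm (c : ℝ) (hc : c ≠ 0) :
    ⇑(modelQuadraticForm c hc) = modelForm c := by
  funext v
  obtain ⟨x, rfl⟩ := (diagonalizingEquiv c hc).surjective v
  rw [modelQuadraticForm, QuadraticMap.comp_apply, LinearEquiv.coe_coe,
    LinearEquiv.symm_apply_apply, weightedSumSquares_signatureWeights, modelForm_diagonalizingEquiv]

noncomputable def diagonalizingIsometry (c : ℝ) (hc : c ≠ 0) :
    (weightedSumSquares ℝ signatureWeights).IsometryEquiv (modelQuadraticForm c hc) where
  toLinearEquiv := diagonalizingEquiv c hc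
  map_app' x := by simp [modelQuadraticForm]

lemma diagonalizingEquiv_single_six (c : ℝ) (hc : c ≠ 0) :
    diagonalizingEquiv c hc (Pi.single 6 1) = (0, 1, -1, 0) := by
  simp [diagonalizingEquiv, Prod.ext_iff, Complex.ext_iff]

lemma radical_modelQuadraticForm (c : ℝ) (hc : c ≠ 0) :
    (modelQuadraticForm c hc).radical = Submodule.span ℝ {(0, 1, -1, 0)} := by
  have hzero : {i | signatureWeights i = 0} = {6} := by
    ext i; fin_cases i <;> simp [signatureWeights]
  rw [← (diagonalizingIsometry c hc).map_radical, radical_weightedSumSquares, hzero,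
    Pi.spanSubset, Set.image_singleton, Submodule.map_span, Set.image_singleton]
  simp [diagonalizingIsometry, diagonalizingEquiv_single_six]

lemma sigNeg_modelQuadraticForm (c : ℝ) (hc : c ≠ 0) : sigNeg (modelQuadraticForm c hc) = 3 := by
  have hneg : {i | signatureWeights i < 0} = ↑({3, 4, 5} : Finset (Fin 7)) := by
    ext i; fin_cases i <;> simp [signatureWeights]
  rw [sigNeg_of_equiv_weightedSumSquares ⟨(diagonalizingIsometry c hc).symm⟩, hneg,
    Set.ncard_coe_finset]
  rfl

/-- The model quadratic form `q(f,z,w,λ) = f·Im(z+w) − c·Re((w̄+z)·λ̄)` (with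
`c > 0`) on the 7-dimensional real vector space `ℝ × ℂ × ℂ × ℂ`:
(i) it is a quadratic form whose radical (vectors whose polar form vanishes
identically) is exactly the real span of `e₀ = (0, 1, −1, 0)`;
(ii) in suitable real linear coordinates it is `x₁²+x₂²+x₃²−x₄²−x₅²−x₆²`,
so it has rank 6 and signature (3,3), and the maximal dimension of a
negative definite subspace is 3. -/
theorem model_resonance_form (c : ℝ) (hc : 0 < c)
    (q : ℝ × ℂ × ℂ × ℂ → ℝ)
    (hq : ∀ (f : ℝ) (z w l : ℂ),
      q (f, z, w, l) = f * (z + w).im - c * ((star w + z) * star l).re) :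
    (∃ Q : QuadraticForm ℝ (ℝ × ℂ × ℂ × ℂ), ⇑Q = q) ∧
    ({x : ℝ × ℂ × ℂ × ℂ | ∀ y, q (x + y) - q x - q y = 0}
      = (Submodule.span ℝ {(((0 : ℝ), (1 : ℂ), (-1 : ℂ), (0 : ℂ)))} :
          Submodule ℝ (ℝ × ℂ × ℂ × ℂ))) ∧
    (∃ T : (Fin 7 → ℝ) ≃ₗ[ℝ] (ℝ × ℂ × ℂ × ℂ),
      ∀ x : Fin 7 → ℝ,
        q (T x) = x 0 ^ 2 + x 1 ^ 2 + x 2 ^ 2 - x 3 ^ 2 - x 4 ^ 2 - x 5 ^ 2) ∧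
    (⨆ W : {W : Submodule ℝ (ℝ × ℂ × ℂ × ℂ) // ∀ v ∈ W, v ≠ 0 → q v < 0},
        Module.finrank ℝ W.1) = 3 := by
  obtain rfl : q = modelForm c := funext fun ⟨f, z, w, l⟩ => hq f z w l
  have hQ := coe_modelQuadraticForm c hc.ne'
  refine ⟨⟨_, hQ⟩, ?_, ⟨diagonalizingEquiv c hc.ne', modelForm_diagonalizingEquiv c hc.ne'⟩, ?_⟩
  · rw [← hQ, ← radical_modelQuadraticForm c hc.ne', coe_radical_eq_setOf_polar]
    rfl
  · rw [← hQ, iSup_finrank_negDef_eq_sigNeg, sigNeg_modelQuadraticForm]
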